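/- arXiv:1604.07243 — 3 statements merged into one kernel-verified Lean document; each statement's English description precedes it below -/
import Mathlib

section
/- Finite-mixture EM monotonicity: let P : Fin C → X → ℝ_{>0} be component densities evaluated at data points x : Fin N → X, and for parameters consisting of mixture weights λ, λ' (probability vectors on Fin C) and component values, define L(λ, P) = Σₙ log(Σ_c λ_c * P c (xₙ)). Suppose (λ', P') satisfies Q(λ', P') ≥ Q(λ, P) where Q(μ, R) = Σₙ Σ_c γ_{nc} * log(μ_c * R c (xₙ)) and γ_{nc} = λ_c P c (xₙ) / Σ_k λ_k P k (xₙ). Then L(λ', P') ≥ L(λ, P). -/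
open Real Finset in
lemma jensen_log {C : ℕ} (w p : Fin C → ℝ) (hw : ∀ c, 0 < w c)
    (hws : ∑ c, w c = 1) (hp : ∀ c, 0 < p c) :
    ∑ c, w c * Real.log (p c) ≤ Real.log (∑ c, w c * p c) := by
  have := (strictConcaveOn_log_Ioi.concaveOn).le_map_sum
    (t := Finset.univ) (w := w) (p := p)
    (fun c _ => (hw c).le) hws (fun c _ => hp c)
  simpa [smul_eq_mul] using this

open Real Finset in
/-- Generalized-EM monotonicity for finite mixtures: any update that does not decrease
the auxiliary function `Q` does not decrease the data log-likelihood. -/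
theorem em_monotone {X : Type*} {N C : ℕ} (x : Fin N → X)
    (P P' : Fin C → X → ℝ) (lam lam' : Fin C → ℝ)
    (hlam : ∀ c, 0 < lam c) (hlam' : ∀ c, 0 < lam' c)
    (hlams : ∑ c, lam c = 1) (hlams' : ∑ c, lam' c = 1)
    (hP : ∀ c n, 0 < P c (x n)) (hP' : ∀ c n, 0 < P' c (x n)) :
    let γ : Fin N → Fin C → ℝ := fun n c =>
      lam c * P c (x n) / ∑ k, lam k * P k (x n)
    let Q : (Fin C → ℝ) → (Fin C → X → ℝ) → ℝ := fun μ R =>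
      ∑ n, ∑ c, γ n c * Real.log (μ c * R c (x n))
    Q lam' P' ≥ Q lam P →
      ∑ n, Real.log (∑ c, lam' c * P' c (x n)) ≥
        ∑ n, Real.log (∑ c, lam c * P c (x n)) := by
  intro γ Q hQ
  have hne : (Finset.univ : Finset (Fin C)).Nonempty := by
    by_contra h
    rw [Finset.not_nonempty_iff_eq_empty] at h
    simp [h] at hlams
  have hS : ∀ n, 0 < ∑ k, lam k * P k (x n) := fun n =>
    Finset.sum_pos (fun k _ => mul_pos (hlam k) (hP k n)) hne
  have hγpos : ∀ n c, 0 < γ n c := fun n c =>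
    div_pos (mul_pos (hlam c) (hP c n)) (hS n)
  have hγsum : ∀ n, ∑ c, γ n c = 1 := by
    intro n
    simp only [γ, ← Finset.sum_div]
    exact div_self (hS n).ne'
  -- entropy term
  set H : Fin N → ℝ := fun n => ∑ c, γ n c * Real.log (γ n c) with hH
  -- lower bound for new likelihood
  have hub : ∀ n, ∑ c, γ n c * Real.log (lam' c * P' c (x n)) - H n ≤
      Real.log (∑ c, lam' c * P' c (x n)) := by
    intro n
    have hj := jensen_log (γ n) (fun c => lam' c * P' c (x n) / γ n c)
      (hγpos n) (hγsum n) (fun c => div_pos (mul_pos (hlam' c) (hP' c n)) (hγpos n c))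
    have h1 : ∀ c, γ n c * (lam' c * P' c (x n) / γ n c) = lam' c * P' c (x n) := by
      intro c; rw [mul_comm, div_mul_cancel₀ _ (hγpos n c).ne']
    have h2 : ∀ c, γ n c * Real.log (lam' c * P' c (x n) / γ n c)
        = γ n c * Real.log (lam' c * P' c (x n)) - γ n c * Real.log (γ n c) := by
      intro c
      rw [Real.log_div (mul_pos (hlam' c) (hP' c n)).ne' (hγpos n c).ne', mul_sub]
    calc ∑ c, γ n c * Real.log (lam' c * P' c (x n)) - H n
        = ∑ c, γ n c * Real.log (lam' c * P' c (x n) / γ n c) := by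
          simp [hH, h2, Finset.sum_sub_distrib]
      _ ≤ Real.log (∑ c, γ n c * (lam' c * P' c (x n) / γ n c)) := hj
      _ = Real.log (∑ c, lam' c * P' c (x n)) := by simp [h1]
  -- exact identity for old likelihood
  have heq : ∀ n, ∑ c, γ n c * Real.log (lam c * P c (x n)) - H n =
      Real.log (∑ c, lam c * P c (x n)) := by
    intro n
    have h2 : ∀ c, γ n c * Real.log (lam c * P c (x n)) - γ n c * Real.log (γ n c)
        = γ n c * Real.log (∑ k, lam k * P k (x n)) := by
      intro c
      have : Real.log (lam c * P c (x n)) - Real.log (γ n c)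
          = Real.log (∑ k, lam k * P k (x n)) := by
        rw [show γ n c = lam c * P c (x n) / ∑ k, lam k * P k (x n) from rfl,
          Real.log_div (mul_pos (hlam c) (hP c n)).ne' (hS n).ne']
        ring
      rw [← mul_sub, this]
    calc ∑ c, γ n c * Real.log (lam c * P c (x n)) - H n
        = ∑ c, (γ n c * Real.log (lam c * P c (x n)) - γ n c * Real.log (γ n c)) := by
          simp [hH, Finset.sum_sub_distrib]
      _ = ∑ c, γ n c * Real.log (∑ k, lam k * P k (x n)) := by simp [h2]
      _ = Real.log (∑ k, lam k * P k (x n)) := by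
          rw [← Finset.sum_mul, hγsum n, one_mul]
  calc ∑ n, Real.log (∑ c, lam c * P c (x n))
      = ∑ n, (∑ c, γ n c * Real.log (lam c * P c (x n)) - H n) := by
        exact Finset.sum_congr rfl fun n _ => (heq n).symm
    _ = Q lam P - ∑ n, H n := by rw [Finset.sum_sub_distrib]
    _ ≤ Q lam' P' - ∑ n, H n := by linarith
    _ = ∑ n, (∑ c, γ n c * Real.log (lam' c * P' c (x n)) - H n) := by
        rw [Finset.sum_sub_distrib]
    _ ≤ ∑ n, Real.log (∑ c, lam' c * P' c (x n)) :=
        Finset.sum_le_sum fun n _ => hub n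
end

section
/- EM lower-bound inequality: with the notation of finite mixtures, for positive mixture weights λ, λ' and positive component values P, P' at each data point, Σₙ log(Σ_c λ'_c P'_c(xₙ)) - Σₙ log(Σ_c λ_c P_c(xₙ)) ≥ Q(λ', P') - Q(λ, P), where Q(μ, R) = Σₙ Σ_c γ_{nc} log(μ_c R_c(xₙ)) and γ_{nc} = λ_c P_c(xₙ)/Σ_k λ_k P_k(xₙ). -/
/-!
The inequality holds data point by data point. With `a c = λ_c P_c(xₙ)`, `b c = λ'_c P'_c(xₙ)` and
totals `A`, `B`, the old responsibilities are `a c / A`, and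
`∑ c, (a c / A) * log (b c / a c) - log (B / A) = -KL(a / A ‖ b / B) ≤ 0`
by Gibbs' inequality, which is `log t ≤ t - 1` applied termwise.
-/

open Real Finset

namespace Real

theorem sum_mul_log_div_le_sum_sub {ι : Type*} (s : Finset ι) {p q : ι → ℝ}
    (hp : ∀ i ∈ s, 0 < p i) (hq : ∀ i ∈ s, 0 < q i) :
    ∑ i ∈ s, p i * log (q i / p i) ≤ ∑ i ∈ s, q i - ∑ i ∈ s, p i := by
  rw [← sum_sub_distrib]
  refine sum_le_sum fun i hi => ?_
  calc p i * log (q i / p i) ≤ p i * (q i / p i - 1) :=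
        mul_le_mul_of_nonneg_left (log_le_sub_one_of_pos (div_pos (hq i hi) (hp i hi)))
          (hp i hi).le
    _ = q i - p i := by field_simp [(hp i hi).ne']

theorem sum_div_sum_mul_log_sub_log_le {ι : Type*} (s : Finset ι) {a b : ι → ℝ}
    (ha : ∀ i ∈ s, 0 < a i) (hb : ∀ i ∈ s, 0 < b i) :
    ∑ i ∈ s, a i / (∑ j ∈ s, a j) * (log (b i) - log (a i)) ≤
      log (∑ j ∈ s, b j) - log (∑ j ∈ s, a j) := by
  rcases s.eq_empty_or_nonempty with rfl | hs
  · simp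
  set A := ∑ j ∈ s, a j with hA_def
  set B := ∑ j ∈ s, b j
  have hA : 0 < A := sum_pos ha hs
  have hB : 0 < B := sum_pos hb hs
  have hlog : ∀ i ∈ s, log (b i / B / (a i / A)) = (log (b i) - log (a i)) - (log B - log A) :=
    fun i hi => by
      rw [log_div (div_pos (hb i hi) hB).ne' (div_pos (ha i hi) hA).ne',
        log_div (hb i hi).ne' hB.ne', log_div (ha i hi).ne' hA.ne']
      ring
  have gibbs : ∑ i ∈ s, a i / A * log (b i / B / (a i / A)) ≤ 0 := by
    calc _ ≤ ∑ i ∈ s, b i / B - ∑ i ∈ s, a i / A :=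
          sum_mul_log_div_le_sum_sub s (fun i hi => div_pos (ha i hi) hA)
            (fun i hi => div_pos (hb i hi) hB)
      _ = 0 := by rw [← sum_div, ← sum_div, div_self hA.ne', div_self hB.ne', sub_self]
  have hsplit : ∑ i ∈ s, a i / A * log (b i / B / (a i / A)) =
      ∑ i ∈ s, a i / A * (log (b i) - log (a i)) - (log B - log A) := by
    rw [sum_congr rfl fun i hi => congrArg (a i / A * ·) (hlog i hi)]
    simp only [mul_sub (a _ / A), sum_sub_distrib, ← sum_mul, ← sum_div, ← hA_def, div_self hA.ne',
      one_mul]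
  linarith

end Real

open Real Finset in
theorem em_lower_bound_general {X : Type*} {N C : ℕ} (x : Fin N → X)
    (P P' : Fin C → X → ℝ) (lam lam' : Fin C → ℝ)
    (hlam : ∀ c, 0 < lam c) (hlam' : ∀ c, 0 < lam' c)
    (hP : ∀ c n, 0 < P c (x n)) (hP' : ∀ c n, 0 < P' c (x n)) :
    let γ : Fin N → Fin C → ℝ := fun n c =>
      lam c * P c (x n) / ∑ k, lam k * P k (x n)
    let Q : (Fin C → ℝ) → (Fin C → X → ℝ) → ℝ := fun μ R =>
      ∑ n, ∑ c, γ n c * Real.log (μ c * R c (x n))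
    (∑ n, Real.log (∑ c, lam' c * P' c (x n))) -
        (∑ n, Real.log (∑ c, lam c * P c (x n))) ≥
      Q lam' P' - Q lam P := by
  intro γ Q
  simp only [Q, γ, ge_iff_le, ← sum_sub_distrib, ← mul_sub]
  exact sum_le_sum fun n _ => sum_div_sum_mul_log_sub_log_le univ
    (fun c _ => mul_pos (hlam c) (hP c n)) (fun c _ => mul_pos (hlam' c) (hP' c n))

open Real Finset in
/-- EM lower-bound inequality: the improvement in mixture log-likelihood is at least
the improvement in the auxiliary function `Q` computed with old responsibilities. -/
theorem em_lower_bound {X : Type*} {N C : ℕ} (x : Fin N → X)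
    (P P' : Fin C → X → ℝ) (lam lam' : Fin C → ℝ)
    (hlam : ∀ c, 0 < lam c) (hlam' : ∀ c, 0 < lam' c)
    (hlams : ∑ c, lam c = 1) (hlams' : ∑ c, lam' c = 1)
    (hP : ∀ c n, 0 < P c (x n)) (hP' : ∀ c n, 0 < P' c (x n)) :
    let γ : Fin N → Fin C → ℝ := fun n c =>
      lam c * P c (x n) / ∑ k, lam k * P k (x n)
    let Q : (Fin C → ℝ) → (Fin C → X → ℝ) → ℝ := fun μ R =>
      ∑ n, ∑ c, γ n c * Real.log (μ c * R c (x n))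
    (∑ n, Real.log (∑ c, lam' c * P' c (x n))) -
        (∑ n, Real.log (∑ c, lam c * P c (x n))) ≥
      Q lam' P' - Q lam P :=
  em_lower_bound_general x P P' lam lam' hlam hlam' hP hP'
end

section
/- Linearity of a tree SPN in a designated node: consider the inductive SPN type where leaves are indexed, and fix a leaf index l that occurs exactly once in S. Define eval_θ S t as the evaluation where leaf l takes value t and all other leaves take their fixed values. Then there exist constants a, b ∈ ℝ (independent of t) such that eval S t = a * t + b for all t; moreover a = Σ over subnetwork terms containing leaf l of the product of weights and other leaf values in that term, and b = Σ over subnetwork terms not containing leaf l. -/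
/-- Sum-product expressions with indexed leaves. -/
inductive SPN (ι : Type) : Type
  | Leaf (i : ι) : SPN ι
  | Prod (s₁ s₂ : SPN ι) : SPN ι
  | Sum (w : ℝ) (s₁ s₂ : SPN ι) : SPN ι

variable {ι : Type} [DecidableEq ι]

/-- Number of occurrences of leaf index `l` in the expression tree. -/
def SPN.occ (l : ι) : SPN ι → ℕ
  | .Leaf i => if i = l then 1 else 0
  | .Prod s₁ s₂ => s₁.occ l + s₂.occ l
  | .Sum _ s₁ s₂ => s₁.occ l + s₂.occ l

/-- Evaluation where leaf `l` takes value `t` and all other leaves take their value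
under the valuation `val`. -/
def SPN.evalAt (val : ι → ℝ) (l : ι) (t : ℝ) : SPN ι → ℝ
  | .Leaf i => if i = l then t else val i
  | .Prod s₁ s₂ => s₁.evalAt val l t * s₂.evalAt val l t
  | .Sum w s₁ s₂ => w * s₁.evalAt val l t + (1 - w) * s₂.evalAt val l t

/-- Subnetwork terms (with leaf `l` taking value `t`), each tagged by whether the
subnetwork contains leaf `l`. -/
def SPN.tterms (val : ι → ℝ) (l : ι) (t : ℝ) : SPN ι → Multiset (Bool × ℝ)
  | .Leaf i => if i = l then {(true, t)} else {(false, val i)}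
  | .Prod s₁ s₂ =>
      (s₁.tterms val l t).bind (fun p =>
        (s₂.tterms val l t).map (fun q => (p.1 || q.1, p.2 * q.2)))
  | .Sum w s₁ s₂ =>
      (s₁.tterms val l t).map (fun p => (p.1, w * p.2)) +
      (s₂.tterms val l t).map (fun q => (q.1, (1 - w) * q.2))

lemma Multiset.filter_bind' {α β : Type*} (p : β → Prop) [DecidablePred p]
    (s : Multiset α) (f : α → Multiset β) :
    (s.bind f).filter p = s.bind fun a => (f a).filter p := by
  induction s using Multiset.induction with
  | empty => simp
  | cons a s ih => simp [Multiset.cons_bind, Multiset.filter_add, ih]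

lemma sum_map_ite2 {α : Type*} (p : α → Prop) [DecidablePred p] (f g : α → ℝ) (m : Multiset α) :
    (m.map fun a => if p a then f a else g a).sum
      = ((m.filter p).map f).sum + ((m.filter fun a => ¬ p a).map g).sum := by
  induction m using Multiset.induction with
  | empty => simp
  | cons a s ih =>
    by_cases h : p a <;> simp [Multiset.filter_cons, h, ih] <;> ring

namespace SPN

variable (val : ι → ℝ) (l : ι)

/-- Sum of terms tagged `b`. -/
def F (b : Bool) (t : ℝ) (S : SPN ι) : ℝ :=
  (((S.tterms val l t).filter (fun p => p.1 = b)).map Prod.snd).sum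

/-- Total sum of terms. -/
def Tot (t : ℝ) (S : SPN ι) : ℝ := ((S.tterms val l t).map Prod.snd).sum

lemma not_filter_eq (t : ℝ) (S : SPN ι) :
    (S.tterms val l t).filter (fun p => ¬ p.1 = true)
      = (S.tterms val l t).filter (fun p => p.1 = false) :=
  Multiset.filter_congr (fun x _ => by simp)

lemma Tot_split (t : ℝ) (S : SPN ι) :
    Tot val l t S = F val l true t S + F val l false t S := by
  rw [Tot, F, F, ← not_filter_eq, ← Multiset.sum_add, ← Multiset.map_add,
    Multiset.filter_add_not]

lemma Tot_eq_eval (t : ℝ) (S : SPN ι) : Tot val l t S = S.evalAt val l t := by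
  induction S with
  | Leaf i => by_cases h : i = l <;> simp [Tot, tterms, evalAt, h]
  | Prod s₁ s₂ ih₁ ih₂ =>
    rw [Tot, tterms, Multiset.map_bind, Multiset.sum_bind, evalAt, ← ih₁, ← ih₂]
    simp only [Multiset.map_map, Function.comp]
    have : ∀ x : Bool × ℝ,
        (Multiset.map (fun y : Bool × ℝ => x.2 * y.2) (s₂.tterms val l t)).sum
          = x.2 * Tot val l t s₂ := fun x => Multiset.sum_map_mul_left (f := Prod.snd) ..
    simp only [this]
    rw [Tot, Multiset.sum_map_mul_right]
    rfl
  | Sum w s₁ s₂ ih₁ ih₂ =>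
    rw [Tot, tterms, evalAt, ← ih₁, ← ih₂]
    simp only [Multiset.map_add, Multiset.sum_add, Multiset.map_map, Function.comp]
    rw [Multiset.sum_map_mul_left, Multiset.sum_map_mul_left, Tot, Tot]

lemma F_leaf (b : Bool) (t : ℝ) (i : ι) :
    F val l b t (.Leaf i) =
      if i = l then (if b then t else 0) else (if b then 0 else val i) := by
  by_cases h : i = l <;> cases b <;>
    simp [F, tterms, h, Multiset.filter_singleton]

lemma F_sum (b : Bool) (t : ℝ) (w : ℝ) (s₁ s₂ : SPN ι) :
    F val l b t (.Sum w s₁ s₂) = w * F val l b t s₁ + (1 - w) * F val l b t s₂ := by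
  simp only [F, tterms, Multiset.filter_add, Multiset.filter_map, Multiset.map_add,
    Multiset.sum_add, Multiset.map_map, Function.comp]
  rw [Multiset.sum_map_mul_left, Multiset.sum_map_mul_left]

lemma F_prod_inner (b : Bool) (t : ℝ) (s₂ : SPN ι) (p : Bool × ℝ) :
    ((((s₂.tterms val l t).map fun q => (p.1 || q.1, p.2 * q.2)).filter
        (fun q => q.1 = b)).map Prod.snd).sum
      = if p.1 = true then (if b then p.2 * Tot val l t s₂ else 0)
        else p.2 * F val l b t s₂ := by
  rw [Multiset.filter_map, Multiset.map_map]
  obtain ⟨pb, pv⟩ := p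
  cases pb <;> cases b <;>
    simp only [Function.comp, Bool.false_or, Bool.true_or, F, Tot, if_true, if_false,
      Multiset.filter_map, Multiset.map_map, Bool.false_eq_true, reduceIte]
  · exact Multiset.sum_map_mul_left (f := Prod.snd) ..
  · exact Multiset.sum_map_mul_left (f := Prod.snd) ..
  · rw [Multiset.filter_eq_nil.mpr (by simp)]; simp
  · rw [Multiset.filter_eq_self.mpr (by simp)]
    exact Multiset.sum_map_mul_left (f := Prod.snd) ..

lemma Ff_prod (t : ℝ) (s₁ s₂ : SPN ι) :
    F val l false t (.Prod s₁ s₂) = F val l false t s₁ * F val l false t s₂ := by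
  rw [F, tterms, Multiset.filter_bind', Multiset.map_bind, Multiset.sum_bind]
  simp only [F_prod_inner val l false t s₂, Bool.false_eq_true, if_false]
  rw [sum_map_ite2]
  simp only [Multiset.map_const', Multiset.sum_replicate, smul_zero, zero_add]
  rw [not_filter_eq, Multiset.sum_map_mul_right]
  rfl

lemma Ft_prod (t : ℝ) (s₁ s₂ : SPN ι) :
    F val l true t (.Prod s₁ s₂)
      = F val l true t s₁ * Tot val l t s₂ + F val l false t s₁ * F val l true t s₂ := by
  rw [F, tterms, Multiset.filter_bind', Multiset.map_bind, Multiset.sum_bind]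
  simp only [F_prod_inner val l true t s₂, if_true]
  rw [sum_map_ite2, not_filter_eq, Multiset.sum_map_mul_right, Multiset.sum_map_mul_right]
  rfl

lemma key (S : SPN ι) : S.occ l ≤ 1 → ∀ t : ℝ,
    (S.occ l = 0 → F val l true t S = 0) ∧
    F val l true t S = t * F val l true 1 S ∧
    F val l false t S = F val l false 0 S := by
  induction S with
  | Leaf i =>
    intro h t
    by_cases hi : i = l <;> simp [F_leaf, occ, hi]
  | Sum w s₁ s₂ ih₁ ih₂ =>
    intro h t
    have h1 : s₁.occ l ≤ 1 := by simp only [occ] at h; omega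
    have h2 : s₂.occ l ≤ 1 := by simp only [occ] at h; omega
    obtain ⟨z1, a1, b1⟩ := ih₁ h1 t
    obtain ⟨z2, a2, b2⟩ := ih₂ h2 t
    refine ⟨fun h0 => ?_, ?_, ?_⟩
    · simp only [occ, Nat.add_eq_zero] at h0
      rw [F_sum, z1 h0.1, z2 h0.2]; ring
    · rw [F_sum, F_sum, a1, a2]; ring
    · rw [F_sum, F_sum, b1, b2]
  | Prod s₁ s₂ ih₁ ih₂ =>
    intro h t
    have h1 : s₁.occ l ≤ 1 := by simp only [occ] at h; omega
    have h2 : s₂.occ l ≤ 1 := by simp only [occ] at h; omega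
    obtain ⟨z1, a1, b1⟩ := ih₁ h1 t
    obtain ⟨z1', a1', b1'⟩ := ih₁ h1 1
    obtain ⟨z2, a2, b2⟩ := ih₂ h2 t
    obtain ⟨z2', a2', b2'⟩ := ih₂ h2 1
    have hcase : s₁.occ l = 0 ∨ s₂.occ l = 0 := by simp only [occ] at h; omega
    rcases hcase with h0 | h0
    · have e1 : F val l true t s₁ = 0 := z1 h0
      have e1' : F val l true 1 s₁ = 0 := z1' h0
      refine ⟨fun hz => ?_, ?_, ?_⟩
      · simp only [occ, Nat.add_eq_zero] at hz
        rw [Ft_prod, e1, z2 hz.2, zero_mul, mul_zero, add_zero]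
      · rw [Ft_prod, Ft_prod, e1, e1', a2, b1, b1', zero_mul, zero_mul, zero_add,
          zero_add]
        ring
      · rw [Ff_prod, Ff_prod, b1, b2]
    · have e2 : F val l true t s₂ = 0 := z2 h0
      have e2' : F val l true 1 s₂ = 0 := z2' h0
      refine ⟨fun hz => ?_, ?_, ?_⟩
      · simp only [occ, Nat.add_eq_zero] at hz
        rw [Ft_prod, z1 hz.1, e2, zero_mul, mul_zero, add_zero]
      · rw [Ft_prod, Ft_prod, e2, e2', a1, mul_zero, mul_zero, add_zero, add_zero,
          Tot_split, Tot_split, e2, e2', b2, b2']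
        ring
      · rw [Ff_prod, Ff_prod, b1, b2]

end SPN

/-- If leaf `l` occurs exactly once, the SPN output is an affine function `a * t + b`
of the leaf value `t`; moreover `a` is the sum over subnetwork terms containing `l`
of the product of weights and other leaf values (the term with leaf value `1`), and
`b` is the sum over subnetwork terms not containing `l`. -/
theorem SPN.evalAt_affine_in_leaf (val : ι → ℝ) (l : ι) (S : SPN ι)
    (h : S.occ l = 1) :
    ∃ a b : ℝ, (∀ t : ℝ, S.evalAt val l t = a * t + b) ∧
      a = (((S.tterms val l 1).filter (fun p => p.1 = true)).map Prod.snd).sum ∧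
      ∀ t : ℝ,
        b = (((S.tterms val l t).filter (fun p => p.1 = false)).map Prod.snd).sum := by
  refine ⟨F val l true 1 S, F val l false 0 S, fun t => ?_, rfl, fun t => ?_⟩
  · obtain ⟨-, ha, hb⟩ := key val l S h.le t
    rw [← Tot_eq_eval, Tot_split, ha, hb]; ring
  · exact ((key val l S h.le t).2.2).symm
end
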